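/- arXiv:2109.13655 — 6 statements merged into one kernel-verified Lean document; each statement's English description precedes it below -/
import Mathlib

section
/- Let Γ be the positively oriented circle of center c ∈ ℂ and radius r > 0, and suppose zB − A is invertible for every z on Γ. Define S_k := (1/(2πi)) ∮_Γ z^k (zB − A)^{−1} B V_in dz for k = 0, 1, …, M−1 and S := [S_0, S_1, …, S_{M−1}] ∈ ℂ^{n×LM}. Let d be the number of indices i with |λ_i − c| < r. Then the column space of S equals span{x_i : |λ_i − c| < r} if and only if rank(S) = d. -/
/-!
Since `B⁻¹A = XΛX⁻¹`, the resolvent factors as `(zB − A)⁻¹B = X (z − Λ)⁻¹ X⁻¹`, so by Cauchy's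
integral formula `S_k = X Λᵏ P X⁻¹ V_in`, where `P` is the diagonal projection onto the indices
with `λ_i` inside `Γ`. Hence every column of `S` lies in the span of the eigenvectors inside `Γ`,
which has dimension `d` because the columns of `X` are independent; a subspace of a
`d`-dimensional space is the whole space exactly when it has dimension `d`.
-/

open Matrix Metric Set Complex Real

theorem two_pi_I_inv_mul_circleIntegral_mul_sub_inv {f : ℂ → ℂ} (hf : Differentiable ℂ f)
    {c w : ℂ} {r : ℝ} (hr : 0 ≤ r) (hw : ‖w - c‖ ≠ r) :
    (2 * π * I)⁻¹ * (∮ z in C(c, r), f z * (z - w)⁻¹) =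
      if ‖w - c‖ < r then f w else 0 := by
  split_ifs with hin
  · simpa only [smul_eq_mul, mul_comm (f _)] using
      hf.diffContOnCl.two_pi_i_inv_smul_circleIntegral_sub_inv_smul (mem_ball_iff_norm.2 hin)
  · have hout : ∀ z ∈ closedBall c r, z - w ≠ 0 := fun z hz hzw => by
      rw [sub_eq_zero.1 hzw, mem_closedBall_iff_norm] at hz
      exact hin (hz.lt_of_ne hw)
    have hd : DifferentiableOn ℂ (fun z => f z * (z - w)⁻¹) (closedBall c r) :=
      fun z hz => (hf z).mul ((differentiableAt_id.sub_const w).inv (hout z hz))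
        |>.differentiableWithinAt
    rw [(hd.mono closure_ball_subset_closedBall).diffContOnCl.circleIntegral_eq_zero hr,
      mul_zero]

theorem two_pi_I_inv_mul_circleIntegral_mul_sum_sub_inv {ι : Type*} (s : Finset ι)
    {f : ℂ → ℂ} (hf : Differentiable ℂ f) (a w : ι → ℂ) {c : ℂ} {r : ℝ} (hr : 0 ≤ r)
    (hw : ∀ m, ‖w m - c‖ ≠ r) :
    (2 * π * I)⁻¹ * (∮ z in C(c, r), f z * ∑ m ∈ s, a m * (z - w m)⁻¹) =
      ∑ m ∈ s, if ‖w m - c‖ < r then a m * f (w m) else 0 := by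
  have hint : ∀ m ∈ s, CircleIntegrable (fun z => a m * (f z * (z - w m)⁻¹)) c r := by
    intro m _
    refine ContinuousOn.circleIntegrable hr ?_
    refine continuousOn_const.mul (hf.continuous.continuousOn.mul
      ((continuousOn_id.sub continuousOn_const).inv₀ fun z hz hzw => ?_))
    rw [Pi.sub_apply, id, sub_eq_zero] at hzw
    rw [hzw, mem_sphere_iff_norm] at hz
    exact hw m hz
  simp_rw [Finset.mul_sum, mul_left_comm (f _)]
  rw [circleIntegral.integral_fun_sum hint, Finset.mul_sum]
  refine Finset.sum_congr rfl fun m _ => ?_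
  rw [circleIntegral.integral_const_mul, mul_left_comm,
    two_pi_I_inv_mul_circleIntegral_mul_sub_inv hf hr (hw m)]
  split_ifs <;> simp

section
variable {K n : Type*} [Field K] [Fintype n] [DecidableEq n]

theorem mul_diagonal_mul_apply {m l : Type*} (X : Matrix m n K) (d : n → K) (Y : Matrix n l K)
    (i : m) (j : l) : (X * diagonal d * Y) i j = ∑ k, X i k * Y k j * d k := by
  simp only [mul_apply (M := X * diagonal d), mul_diagonal, mul_right_comm]

theorem inv_conj_diagonal {X : Matrix n n K} (hX : IsUnit X) {d : n → K} (hd : ∀ m, d m ≠ 0) :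
    (X * diagonal d * X⁻¹)⁻¹ = X * diagonal d⁻¹ * X⁻¹ := by
  have hXdet := (isUnit_iff_isUnit_det X).1 hX
  refine inv_eq_left_inv ?_
  simp only [Matrix.mul_assoc, nonsing_inv_mul_cancel_left _ _ hXdet]
  rw [← Matrix.mul_assoc (diagonal _), diagonal_mul_diagonal]
  simp [inv_mul_cancel₀ (hd _), mul_nonsing_inv _ hXdet]

theorem inv_smul_sub_mul_of_inv_mul_eq {A B X : Matrix n n K} {lam : n → K} (hB : IsUnit B)
    (hX : IsUnit X) (hdiag : B⁻¹ * A = X * diagonal lam * X⁻¹) {z : K} (hz : ∀ m, z ≠ lam m) :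
    (z • B - A)⁻¹ * B = X * diagonal (fun m => (z - lam m)⁻¹) * X⁻¹ := by
  have hBdet := (isUnit_iff_isUnit_det B).1 hB
  have hXdet := (isUnit_iff_isUnit_det X).1 hX
  have hpencil : B⁻¹ * (z • B - A) = X * diagonal (fun m => z - lam m) * X⁻¹ := by
    have hshift : diagonal (fun m => z - lam m) = z • (1 : Matrix n n K) - diagonal lam := by
      rw [smul_one_eq_diagonal, diagonal_sub]
    rw [Matrix.mul_sub, hdiag, Matrix.mul_smul, nonsing_inv_mul _ hBdet, hshift,
      Matrix.mul_sub, Matrix.sub_mul]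
    simp [mul_nonsing_inv _ hXdet]
  calc (z • B - A)⁻¹ * B = (B⁻¹ * (z • B - A))⁻¹ := by
        rw [Matrix.mul_inv_rev, nonsing_inv_nonsing_inv _ hBdet]
    _ = _ := by rw [hpencil, inv_conj_diagonal hX fun m => sub_ne_zero.2 (hz m)]; rfl

end

theorem mem_span_cols_of_apply_eq_sum {K ι κ : Type*} [Field K] [Fintype κ] {X : Matrix ι κ K}
    {p : κ → Prop} [DecidablePred p] {v : ι → K} (a : κ → K)
    (hv : ∀ i, v i = ∑ m, if p m then X i m * a m else 0) :
    v ∈ Submodule.span K (range fun m : {m // p m} => X.col m) := by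
  have hsum : v = ∑ m, (if p m then a m else 0) • X.col m := by
    ext i
    simp only [hv, Finset.sum_apply, Pi.smul_apply, smul_eq_mul, col_apply, ite_mul, zero_mul]
    exact Finset.sum_congr rfl fun m _ => by split_ifs <;> ring
  rw [hsum]
  refine Submodule.sum_mem _ fun m _ => ?_
  split_ifs with hm
  · exact Submodule.smul_mem _ _ (Submodule.subset_span ⟨⟨m, hm⟩, rfl⟩)
  · rw [zero_smul]
    exact Submodule.zero_mem _

theorem span_cols_eq_iff_rank_eq {K ι κ : Type*} [Field K] [Fintype ι] [DecidableEq ι]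
    [Fintype κ] {S : Matrix ι κ K} {X : Matrix ι ι K} (hX : IsUnit X) {p : ι → Prop}
    [Fintype {i // p i}]
    (hS : ∀ j, S.col j ∈ Submodule.span K (range fun i : {i // p i} => X.col i)) :
    Submodule.span K (range S.col) = Submodule.span K (range fun i : {i // p i} => X.col i) ↔
      S.rank = Fintype.card {i // p i} := by
  have hdim : Module.finrank K (Submodule.span K (range fun i : {i // p i} => X.col i)) =
      Fintype.card {i // p i} :=
    finrank_span_eq_card <| (linearIndependent_cols_iff_isUnit.2 hX).comp _ Subtype.val_injective
  rw [rank_eq_finrank_span_cols, ← hdim]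
  refine ⟨fun h => by rw [h], Submodule.eq_of_le_of_finrank_eq ?_⟩
  exact Submodule.span_le.2 <| range_subset_iff.2 hS

theorem two_pi_I_inv_mul_circleIntegral_pow_mul_resolvent_apply {n ι : Type*} [Fintype n]
    [DecidableEq n] {A B X : Matrix n n ℂ} {lam : n → ℂ} (hB : IsUnit B) (hX : IsUnit X)
    (hdiag : B⁻¹ * A = X * diagonal lam * X⁻¹) (V : Matrix n ι ℂ) {c : ℂ} {r : ℝ} (hr : 0 ≤ r)
    (hlam : ∀ m, ‖lam m - c‖ ≠ r) (k : ℕ) (i : n) (j : ι) :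
    (2 * π * I)⁻¹ * (∮ z in C(c, r), z ^ k * ((z • B - A)⁻¹ * B * V) i j) =
      ∑ m, if ‖lam m - c‖ < r then X i m * ((X⁻¹ * V) m j * lam m ^ k) else 0 := by
  simp only [← mul_assoc]
  rw [← two_pi_I_inv_mul_circleIntegral_mul_sum_sub_inv _ (differentiable_pow k) _ _ hr hlam]
  refine congrArg _ (circleIntegral.integral_congr hr fun z hz => ?_)
  have hz : ∀ m, z ≠ lam m := fun m hzm => hlam m (by rwa [← hzm, ← mem_sphere_iff_norm])
  rw [inv_smul_sub_mul_of_inv_mul_eq hB hX hdiag hz, Matrix.mul_assoc _ X⁻¹,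
    mul_diagonal_mul_apply]

theorem stmt_0_general {n L M : ℕ}
    (A B X : Matrix (Fin n) (Fin n) ℂ) (lam : Fin n → ℂ)
    (hB : IsUnit B) (hX : IsUnit X)
    (hdiag : B⁻¹ * A = X * Matrix.diagonal lam * X⁻¹)
    (Vin : Matrix (Fin n) (Fin L) ℂ)
    (c : ℂ) (r : ℝ) (hr : 0 < r)
    (hnot : ∀ i, ‖lam i - c‖ ≠ r)
    (S : Matrix (Fin n) (Fin M × Fin L) ℂ)
    (hS : ∀ (k : Fin M) (i : Fin n) (j : Fin L),
      S i (k, j) = (2 * (Real.pi : ℂ) * Complex.I)⁻¹ *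
        ∮ z in C(c, r), z ^ (k : ℕ) * (((z • B - A)⁻¹ * B * Vin) i j)) :
    Submodule.span ℂ (Set.range Sᵀ) =
      Submodule.span ℂ
        {x : Fin n → ℂ | ∃ i, ‖lam i - c‖ < r ∧ x = fun j => X j i} ↔
    S.rank = Fintype.card {i : Fin n // ‖lam i - c‖ < r} := by
  have hcol : ∀ p, S.col p ∈
      Submodule.span ℂ (range fun i : {i // ‖lam i - c‖ < r} => X.col i) := by
    rintro ⟨k, j⟩
    refine mem_span_cols_of_apply_eq_sum (fun m => (X⁻¹ * Vin) m j * lam m ^ (k : ℕ))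
      fun i => ?_
    rw [col_apply, hS,
      two_pi_I_inv_mul_circleIntegral_pow_mul_resolvent_apply hB hX hdiag Vin hr.le hnot]
  have hset : {x : Fin n → ℂ | ∃ i, ‖lam i - c‖ < r ∧ x = fun j => X j i} =
      range fun i : {i // ‖lam i - c‖ < r} => X.col i := by
    ext x
    simp only [mem_ofPred_eq, mem_range, Subtype.exists, exists_prop]
    exact exists_congr fun i => and_congr_right fun _ => eq_comm
  rw [hset]
  exact span_cols_eq_iff_rank_eq hX hcol

/-- Complex moment-based subspace theorem for the generalized
eigenvalue problem `A x = λ B x`: the column space of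
`S = [S₀, …, S_{M−1}]`, `S_k = (1/(2πi)) ∮_Γ z^k (zB − A)⁻¹ B V_in dz`,
equals the span of the eigenvectors whose eigenvalues lie inside the circle
`Γ = {z : |z − c| = r}` if and only if `rank S = d`. -/
theorem stmt_0 {n L M : ℕ} (hL : 0 < L) (hM : 0 < M)
    (A B X : Matrix (Fin n) (Fin n) ℂ) (lam : Fin n → ℂ)
    (hB : IsUnit B) (hX : IsUnit X)
    (hdiag : B⁻¹ * A = X * Matrix.diagonal lam * X⁻¹)
    (Vin : Matrix (Fin n) (Fin L) ℂ)
    (c : ℂ) (r : ℝ) (hr : 0 < r)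
    (hreg : ∀ z : ℂ, ‖z - c‖ = r →
      IsUnit (z • B - A))
    (hnot : ∀ i, ‖lam i - c‖ ≠ r)
    (S : Matrix (Fin n) (Fin M × Fin L) ℂ)
    (hS : ∀ (k : Fin M) (i : Fin n) (j : Fin L),
      S i (k, j) = (2 * (Real.pi : ℂ) * Complex.I)⁻¹ *
        ∮ z in C(c, r), z ^ (k : ℕ) * (((z • B - A)⁻¹ * B * Vin) i j)) :
    Submodule.span ℂ (Set.range Sᵀ) =
      Submodule.span ℂ
        {x : Fin n → ℂ | ∃ i, ‖lam i - c‖ < r ∧ x = fun j => X j i} ↔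
    S.rank = Fintype.card {i : Fin n // ‖lam i - c‖ < r} :=
  stmt_0_general A B X lam hB hX hdiag Vin c r hr hnot S hS
end

section
/- Let Γ be the positively oriented circle of center c ∈ ℝ and radius r > 0 with |σ_i² − c| ≠ r for all i, and assume additionally σ_i > 0 for every i with |σ_i² − c| < r. Define S_k := (1/(2πi)) ∮_Γ z^k (zI − AᵀA)^{−1} V_in dz for k = 0, …, M−1 and S := [S_0, S_1, …, S_{M−1}] ∈ ℂ^{n×LM}. Let t be the number of indices i with |σ_i² − c| < r. If rank(S) = t, then the column space of AS equals span{u_i : |σ_i² − c| < r}. -/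
/-!
Write `AᵀA = V diag(σ²) Vᵀ`. On `Γ` the resolvent is `V diag((z - σₚ²)⁻¹) Vᵀ`, so by Cauchy's
integral formula `S_k = V diag(𝟙[σₚ² inside Γ] σₚ^{2k}) Vᵀ V_in`: every column of `S` lies in
`span {vₚ : σₚ² inside Γ}`, a space of dimension `t`, and `rank S = t` forces equality.
Since `A vₚ = σₚ uₚ` with `σₚ ≠ 0` for these `p`, `A` maps this span onto `span {uₚ}`.
-/

open Matrix Metric Complex Real Submodule

theorem ofReal_mem_ball_ofReal_iff {x c r : ℝ} : (x : ℂ) ∈ ball (c : ℂ) r ↔ |x - c| < r := by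
  rw [mem_ball, Complex.dist_eq, ← ofReal_sub, norm_real, Real.norm_eq_abs]

theorem ofReal_mem_sphere_ofReal_iff {x c r : ℝ} : (x : ℂ) ∈ sphere (c : ℂ) r ↔ |x - c| = r := by
  rw [mem_sphere, Complex.dist_eq, ← ofReal_sub, norm_real, Real.norm_eq_abs]

open scoped Classical in
theorem Differentiable.circleIntegral_sub_inv_smul_eq_ite {E : Type*} [NormedAddCommGroup E]
    [NormedSpace ℂ E] [CompleteSpace E] {f : ℂ → E} (hf : Differentiable ℂ f) {c a : ℂ} {R : ℝ}
    (hR : 0 ≤ R) (ha : a ∉ sphere c R) :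
    (∮ z in C(c, R), (z - a)⁻¹ • f z) = if a ∈ ball c R then (2 * π * I : ℂ) • f a else 0 := by
  split_ifs with ha_in
  · exact hf.diffContOnCl.circleIntegral_sub_inv_smul ha_in
  have ha_out : a ∉ closedBall c R := by
    rw [← ball_union_sphere]
    exact fun h => h.elim ha_in ha
  have hsub : ∀ z ∈ closedBall c R, z - a ≠ 0 := fun z hz h => ha_out (sub_eq_zero.1 h ▸ hz)
  refine circleIntegral_eq_zero_of_differentiable_on_off_countable hR Set.countable_empty
    ((continuousOn_id.sub continuousOn_const).inv₀ hsub |>.smul hf.continuous.continuousOn)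
    fun z hz => ((differentiableAt_id.sub_const a).inv ?_).smul (hf z)
  exact hsub z (ball_subset_closedBall hz.1)

theorem inv_smul_one_sub_mul_diagonal_mul_transpose {K n : Type*} [Field K] [Fintype n]
    [DecidableEq n] {Q : Matrix n n K} (hQ : Qᵀ * Q = 1) (w : n → K) {z : K}
    (hz : ∀ p, z ≠ w p) :
    (z • 1 - Q * diagonal w * Qᵀ)⁻¹ = Q * diagonal (fun p => (z - w p)⁻¹) * Qᵀ := by
  have hQ' : Q * Qᵀ = 1 := mul_eq_one_comm.1 hQ
  have hconj : z • 1 - Q * diagonal w * Qᵀ = Q * diagonal (fun p => z - w p) * Qᵀ := by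
    rw [← diagonal_sub, ← smul_one_eq_diagonal, Matrix.mul_sub, Matrix.sub_mul,
      Matrix.mul_smul, Matrix.mul_one, Matrix.smul_mul, hQ']
  apply inv_eq_right_inv
  rw [hconj]
  calc Q * diagonal (fun p => z - w p) * Qᵀ * (Q * diagonal (fun p => (z - w p)⁻¹) * Qᵀ)
      = Q * (diagonal (fun p => z - w p) * (Qᵀ * Q) * diagonal (fun p => (z - w p)⁻¹)) * Qᵀ := by
        simp only [Matrix.mul_assoc]
    _ = 1 := by
        rw [hQ, Matrix.mul_one, diagonal_mul_diagonal,
          show (fun p => (z - w p) * (z - w p)⁻¹) = fun _ => 1 from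
            funext fun p => mul_inv_cancel₀ (sub_ne_zero.2 (hz p)),
          diagonal_one, Matrix.mul_one, hQ']

open scoped Classical in
theorem circleIntegral_pow_mul_inv_smul_one_sub_mul_apply {n ι : Type*} [Fintype n]
    [DecidableEq n] {Q : Matrix n n ℂ} (hQ : Qᵀ * Q = 1) (w : n → ℂ) (X : Matrix n ι ℂ)
    {c : ℂ} {R : ℝ} (hR : 0 ≤ R) (hw : ∀ p, w p ∉ sphere c R) (k : ℕ) (i : n) (j : ι) :
    (2 * π * I : ℂ)⁻¹ * ∮ z in C(c, R), z ^ k * ((z • 1 - Q * diagonal w * Qᵀ)⁻¹ * X) i j =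
      (Q * diagonal (fun p => if w p ∈ ball c R then w p ^ k else 0) * (Qᵀ * X)) i j := by
  have hne : ∀ z ∈ sphere c R, ∀ p, z ≠ w p := fun z hz p h => hw p (h ▸ hz)
  have hexpand : Set.EqOn (fun z => z ^ k * ((z • 1 - Q * diagonal w * Qᵀ)⁻¹ * X) i j)
      (fun z => ∑ p, (Q i p * (Qᵀ * X) p j) * ((z - w p)⁻¹ • z ^ k)) (sphere c R) := by
    intro z hz
    dsimp only
    rw [inv_smul_one_sub_mul_diagonal_mul_transpose hQ w (hne z hz), Matrix.mul_assoc,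
      Matrix.mul_assoc, mul_apply, Finset.mul_sum]
    exact Finset.sum_congr rfl fun p _ => by rw [diagonal_mul, smul_eq_mul]; ring
  have hint : ∀ p ∈ Finset.univ, CircleIntegrable
      (fun z => (Q i p * (Qᵀ * X) p j) * ((z - w p)⁻¹ • z ^ k)) c R := fun p _ =>
    (continuousOn_const.mul (((continuousOn_id.sub continuousOn_const).inv₀
      fun z hz => sub_ne_zero.2 (hne z hz p)).smul (continuous_pow k).continuousOn)).circleIntegrable
        hR
  have hpole : ∀ p, (∮ z in C(c, R), (z - w p)⁻¹ • z ^ k) =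
      (2 * π * I : ℂ) * if w p ∈ ball c R then w p ^ k else 0 := fun p => by
    rw [(differentiable_pow k).circleIntegral_sub_inv_smul_eq_ite hR (hw p), mul_ite, mul_zero,
      smul_eq_mul]
  rw [circleIntegral.integral_congr hR hexpand, circleIntegral.integral_fun_sum hint]
  simp only [circleIntegral.integral_const_mul, hpole, Matrix.mul_assoc, mul_apply (M := Q),
    diagonal_mul, Finset.mul_sum]
  exact Finset.sum_congr rfl fun p _ => by field_simp

theorem span_range_transpose_mul {R l m n : Type*} [CommRing R] [Fintype m] [Fintype n]
    (A : Matrix l m R) (B : Matrix m n R) :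
    span R (Set.range (A * B)ᵀ) = (span R (Set.range Bᵀ)).map A.mulVecLin := by
  calc span R (Set.range (A * B)ᵀ) = LinearMap.range (A * B).mulVecLin := (range_mulVecLin _).symm
    _ = _ := by rw [mulVecLin_mul, LinearMap.range_comp, range_mulVecLin]; rfl

theorem span_range_transpose_mul_eq_of_rank {K n ι : Type*} [Field K] [Fintype n]
    [DecidableEq n] [Fintype ι] {Q : Matrix n n K} (hQ : IsUnit Q) {P : Matrix n ι K}
    (s : n → Prop) [DecidablePred s] (hP : ∀ p, ¬ s p → ∀ q, P p q = 0)
    (hrank : (Q * P).rank = Fintype.card {p // s p}) :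
    span K (Set.range (Q * P)ᵀ) = span K (Set.range fun p : {p // s p} => Qᵀ p) := by
  have hle : span K (Set.range (Q * P)ᵀ) ≤ span K (Set.range fun p : {p // s p} => Qᵀ p) := by
    rw [span_le]
    rintro _ ⟨q, rfl⟩
    have hcol : (Q * P)ᵀ q = ∑ p, P p q • Qᵀ p := by
      ext i
      simp only [transpose_apply, mul_apply, Finset.sum_apply, Pi.smul_apply, smul_eq_mul, mul_comm]
    rw [hcol]
    refine sum_mem fun p _ => ?_
    by_cases hp : s p
    · exact smul_mem _ _ (subset_span ⟨⟨p, hp⟩, rfl⟩)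
    · rw [hP p hp q, zero_smul]
      exact zero_mem _
  have hli : LinearIndependent K fun p : {p // s p} => Qᵀ p :=
    (linearIndependent_cols_iff_isUnit.2 hQ).comp _ Subtype.val_injective
  refine eq_of_le_of_finrank_le hle ?_
  rw [finrank_span_eq_card hli, ← hrank, rank_eq_finrank_span_cols]
  rfl

theorem span_range_smul_of_ne_zero {K M ι : Type*} [Field K] [AddCommGroup M] [Module K M]
    (v : ι → M) {a : ι → K} (ha : ∀ i, a i ≠ 0) :
    span K (Set.range fun i => a i • v i) = span K (Set.range v) := by
  simp only [span_range_eq_iSup, span_singleton_smul_eq (ha _).isUnit]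

section SVD

variable {R m n : Type*} [CommRing R] [Fintype n] [DecidableEq n]
  {A U : Matrix m n R} {V : Matrix n n R} {σ : n → R}

theorem transpose_mul_self_of_eq_mul_diagonal_mul_transpose [Fintype m]
    (hA : A = U * diagonal σ * Vᵀ) (hU : Uᵀ * U = 1) : Aᵀ * A = V * diagonal (fun p => σ p ^ 2) * Vᵀ := by
  simp only [hA, transpose_mul, transpose_transpose, diagonal_transpose, Matrix.mul_assoc]
  rw [← Matrix.mul_assoc Uᵀ, hU, Matrix.one_mul, ← Matrix.mul_assoc (diagonal σ),
    diagonal_mul_diagonal]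
  simp only [sq]

theorem mulVec_transpose_apply_of_eq_mul_diagonal_mul_transpose (hA : A = U * diagonal σ * Vᵀ)
    (hV : Vᵀ * V = 1) (p : n) : A *ᵥ Vᵀ p = σ p • Uᵀ p := by
  have hAV : A * V = U * diagonal σ := by rw [hA, Matrix.mul_assoc, hV, Matrix.mul_one]
  ext i
  calc (A *ᵥ Vᵀ p) i = (A * V) i p := by simp only [mulVec, dotProduct, mul_apply, transpose_apply]
    _ = (σ p • Uᵀ p) i := by rw [hAV, mul_diagonal, Pi.smul_apply, smul_eq_mul, mul_comm]; rfl

end SVD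

theorem map_mulVecLin_span_range_transpose_of_eq_mul_diagonal_mul_transpose {K m n : Type*}
    [Field K] [Fintype n] [DecidableEq n] {A U : Matrix m n K} {V : Matrix n n K} {σ : n → K}
    (hA : A = U * diagonal σ * Vᵀ) (hV : Vᵀ * V = 1) {s : n → Prop} (hσ : ∀ p, s p → σ p ≠ 0) :
    (span K (Set.range fun p : {p // s p} => Vᵀ p)).map A.mulVecLin =
      span K (Set.range fun p : {p // s p} => Uᵀ p) := by
  rw [map_span, ← Set.range_comp]
  simp only [Function.comp_def, mulVecLin_apply,
    mulVec_transpose_apply_of_eq_mul_diagonal_mul_transpose hA hV]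
  exact span_range_smul_of_ne_zero _ fun p => hσ p p.property

theorem map_ofReal_mul {l m n : Type*} [Fintype m] (X : Matrix l m ℝ) (Y : Matrix m n ℝ) :
    (X * Y).map ofReal = X.map ofReal * Y.map ofReal :=
  Matrix.map_mul (f := ofRealHom)

theorem transpose_map_ofReal_mul_self {m n : Type*} [Fintype m] [DecidableEq n]
    {U : Matrix m n ℝ} (hU : Uᵀ * U = 1) : (U.map ofReal)ᵀ * U.map ofReal = 1 := by
  rw [← transpose_map, ← map_ofReal_mul, hU]
  exact Matrix.map_one _ ofReal_zero ofReal_one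

theorem stmt_3_general {m n L M : ℕ}
    (U : Matrix (Fin m) (Fin n) ℝ) (V : Matrix (Fin n) (Fin n) ℝ) (σ : Fin n → ℝ)
    (hU : Uᵀ * U = 1) (hV : Vᵀ * V = 1)
    (A : Matrix (Fin m) (Fin n) ℝ) (hA : A = U * Matrix.diagonal σ * Vᵀ)
    (Vin : Matrix (Fin n) (Fin L) ℝ)
    (c r : ℝ) (hr : 0 < r)
    (hnot : ∀ i, |σ i ^ 2 - c| ≠ r)
    (hpos : ∀ i, |σ i ^ 2 - c| < r → 0 < σ i)
    (S : Matrix (Fin n) (Fin M × Fin L) ℂ)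
    (hS : ∀ (k : Fin M) (i : Fin n) (j : Fin L),
      S i (k, j) = (2 * (Real.pi : ℂ) * Complex.I)⁻¹ *
        ∮ z in C((c : ℂ), r), z ^ (k : ℕ) *
          (((z • (1 : Matrix (Fin n) (Fin n) ℂ) - (Aᵀ * A).map Complex.ofReal)⁻¹ *
            Vin.map Complex.ofReal) i j))
    (hrank : S.rank = Fintype.card {i : Fin n // |σ i ^ 2 - c| < r}) :
    Submodule.span ℂ (Set.range (A.map Complex.ofReal * S)ᵀ) =
      Submodule.span ℂ
        {x : Fin m → ℂ | ∃ i, |σ i ^ 2 - c| < r ∧ x = fun a => ((U a i : ℝ) : ℂ)} := by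
  set Uc := U.map ofReal
  set Vc := V.map ofReal
  set w : Fin n → ℂ := fun p => ((σ p ^ 2 : ℝ) : ℂ)
  have hVc : Vcᵀ * Vc = 1 := transpose_map_ofReal_mul_self hV
  have hAc : A.map ofReal = Uc * diagonal (fun p => (σ p : ℂ)) * Vcᵀ := by
    rw [hA, map_ofReal_mul, map_ofReal_mul, diagonal_map ofReal_zero, transpose_map]
  have hGram : (Aᵀ * A).map ofReal = Vc * diagonal w * Vcᵀ := by
    rw [map_ofReal_mul, transpose_map, transpose_mul_self_of_eq_mul_diagonal_mul_transpose hAc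
      (transpose_map_ofReal_mul_self hU)]
    simp only [w, ofReal_pow]
  have hw : ∀ p, w p ∉ sphere (c : ℂ) r := fun p => ofReal_mem_sphere_ofReal_iff.not.2 (hnot p)
  -- `P = Vᵀ S`, the coordinates of the columns of `S` in the basis of right singular vectors
  open scoped Classical in
  set P : Matrix (Fin n) (Fin M × Fin L) ℂ := Matrix.of fun p q =>
    (if w p ∈ ball (c : ℂ) r then w p ^ (q.1 : ℕ) else 0) * (Vcᵀ * Vin.map ofReal) p q.2
  have hSP : S = Vc * P := by
    ext i ⟨k, j⟩
    rw [hS, hGram, circleIntegral_pow_mul_inv_smul_one_sub_mul_apply hVc w _ hr.le hw,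
      Matrix.mul_assoc, mul_apply, mul_apply]
    simp only [diagonal_mul, P, of_apply]
  have hP : ∀ p, ¬ |σ p ^ 2 - c| < r → ∀ q, P p q = 0 := fun p hp q => by
    simp only [P, of_apply, w, ofReal_mem_ball_ofReal_iff, hp, if_false, zero_mul]
  have hspanS := span_range_transpose_mul_eq_of_rank
    ((isUnit_iff_isUnit_det _).2 (isUnit_det_of_left_inverse hVc)) _ hP (hSP ▸ hrank)
  rw [hSP, span_range_transpose_mul, hspanS,
    map_mulVecLin_span_range_transpose_of_eq_mul_diagonal_mul_transpose hAc hVc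
      fun p hp => ofReal_ne_zero.2 (hpos p hp).ne']
  congr 1
  ext x
  simp only [Set.mem_range, Subtype.exists, exists_prop]
  exact exists_congr fun i => and_congr_right fun _ => eq_comm

/-- If `rank S = t`, where `S = [S₀, …, S_{M−1}]` is built from
contour integrals `S_k = (1/(2πi)) ∮_Γ z^k (zI − AᵀA)⁻¹ V_in dz` over the circle
`Γ = {z : |z − c| = r}` and `t` is the number of indices with `|σᵢ² − c| < r`
(all such `σᵢ > 0`), then the column space of `AS` equals the span of the
corresponding left singular vectors `uᵢ`. -/
theorem stmt_3 {m n L M : ℕ} (hmn : n ≤ m) (hL : 0 < L) (hM : 0 < M)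
    (U : Matrix (Fin m) (Fin n) ℝ) (V : Matrix (Fin n) (Fin n) ℝ) (σ : Fin n → ℝ)
    (hU : Uᵀ * U = 1) (hV : Vᵀ * V = 1) (hσ : ∀ i, 0 ≤ σ i)
    (A : Matrix (Fin m) (Fin n) ℝ) (hA : A = U * Matrix.diagonal σ * Vᵀ)
    (Vin : Matrix (Fin n) (Fin L) ℝ)
    (c r : ℝ) (hr : 0 < r)
    (hnot : ∀ i, |σ i ^ 2 - c| ≠ r)
    (hpos : ∀ i, |σ i ^ 2 - c| < r → 0 < σ i)
    (S : Matrix (Fin n) (Fin M × Fin L) ℂ)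
    (hS : ∀ (k : Fin M) (i : Fin n) (j : Fin L),
      S i (k, j) = (2 * (Real.pi : ℂ) * Complex.I)⁻¹ *
        ∮ z in C((c : ℂ), r), z ^ (k : ℕ) *
          (((z • (1 : Matrix (Fin n) (Fin n) ℂ) - (Aᵀ * A).map Complex.ofReal)⁻¹ *
            Vin.map Complex.ofReal) i j))
    (hrank : S.rank = Fintype.card {i : Fin n // |σ i ^ 2 - c| < r}) :
    Submodule.span ℂ (Set.range (A.map Complex.ofReal * S)ᵀ) =
      Submodule.span ℂ
        {x : Fin m → ℂ | ∃ i, |σ i ^ 2 - c| < r ∧ x = fun a => ((U a i : ℝ) : ℂ)} :=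
  stmt_3_general U V σ hU hV A hA Vin c r hr hnot hpos S hS hrank
end

section
/- Let N ∈ ℕ₊ and let z_1, …, z_N ∈ ℂ be distinct points and ω_1, …, ω_N ∈ ℂ weights satisfying Σ_{j=1}^N ω_j z_j^k = 0 for all k = 0, 1, …, N−2. Then for every λ ∈ ℂ with λ ≠ z_j for all j, and for every k = 0, 1, …, N−1, it holds that Σ_{j=1}^N ω_j z_j^k / (z_j − λ) = λ^k · Σ_{j=1}^N ω_j / (z_j − λ). -/
/-! The identity is linear in the weights, and for a single node
`z^k/(z - λ) - λ^k/(z - λ) = ∑_{i<k} z^i λ^(k-1-i)` is a polynomial in `z` of degree `k - 1`.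
Summing against the weights, the difference of the two sides is a combination of the moments
`∑ⱼ ωⱼ zⱼ^i` with `i < k ≤ N - 1`, all of which vanish. -/

open Finset

section

variable {K ι : Type*} [Field K]

theorem mul_pow_div_sub_sub_pow_mul_div_sub {z lam : K} (hz : z ≠ lam) (w : K) (k : ℕ) :
    w * z ^ k / (z - lam) - lam ^ k * (w / (z - lam)) =
      ∑ i ∈ range k, w * z ^ i * lam ^ (k - 1 - i) := by
  have hsub : z - lam ≠ 0 := sub_ne_zero.mpr hz
  calc w * z ^ k / (z - lam) - lam ^ k * (w / (z - lam))
      = w * ((z ^ k - lam ^ k) / (z - lam)) := by ring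
    _ = w * ∑ i ∈ range k, z ^ i * lam ^ (k - 1 - i) := by
        rw [← geom_sum₂_mul, mul_div_cancel_right₀ _ hsub]
    _ = ∑ i ∈ range k, w * z ^ i * lam ^ (k - 1 - i) := by
        simp only [mul_sum, mul_assoc]

theorem sum_mul_pow_div_sub_sub_pow_mul_sum_div_sub (s : Finset ι) {z : ι → K} {lam : K}
    (hz : ∀ j ∈ s, z j ≠ lam) (w : ι → K) (k : ℕ) :
    ∑ j ∈ s, w j * z j ^ k / (z j - lam) - lam ^ k * ∑ j ∈ s, w j / (z j - lam) =
      ∑ i ∈ range k, (∑ j ∈ s, w j * z j ^ i) * lam ^ (k - 1 - i) := by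
  rw [mul_sum, ← sum_sub_distrib,
    sum_congr rfl fun j hj => mul_pow_div_sub_sub_pow_mul_div_sub (hz j hj) (w j) k, sum_comm]
  simp only [sum_mul]

theorem sum_mul_pow_div_sub_eq_pow_mul_sum_div_sub (s : Finset ι) {z : ι → K} {lam : K}
    (hz : ∀ j ∈ s, z j ≠ lam) (w : ι → K) {k : ℕ}
    (hmoment : ∀ i < k, ∑ j ∈ s, w j * z j ^ i = 0) :
    ∑ j ∈ s, w j * z j ^ k / (z j - lam) = lam ^ k * ∑ j ∈ s, w j / (z j - lam) := by
  rw [← sub_eq_zero, sum_mul_pow_div_sub_sub_pow_mul_sum_div_sub s hz w k]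
  exact sum_eq_zero fun i hi => by rw [hmoment i (mem_range.mp hi), zero_mul]

end

theorem stmt_4_general {N : ℕ} (z ω : Fin N → ℂ)
    (hquad : ∀ k : ℕ, k + 2 ≤ N → ∑ j, ω j * z j ^ k = 0)
    (lam : ℂ) (hlam : ∀ j, lam ≠ z j)
    (k : ℕ) (hk : k + 1 ≤ N) :
    ∑ j, ω j * z j ^ k / (z j - lam) = lam ^ k * ∑ j, ω j / (z j - lam) :=
  sum_mul_pow_div_sub_eq_pow_mul_sum_div_sub univ (fun j _ => (hlam j).symm) ω
    fun i hi => hquad i (by omega)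

/-- If the quadrature points `z₁, …, z_N` are pairwise distinct
and the weights satisfy `∑ⱼ ωⱼ zⱼ^k = 0` for `k = 0, 1, …, N−2`, then for every
`λ` distinct from all `zⱼ` and every `k = 0, 1, …, N−1`,
`∑ⱼ ωⱼ zⱼ^k / (zⱼ − λ) = λ^k ∑ⱼ ωⱼ / (zⱼ − λ)`. -/
theorem stmt_4 {N : ℕ} (hN : 0 < N) (z ω : Fin N → ℂ)
    (hdist : Function.Injective z)
    (hquad : ∀ k : ℕ, k + 2 ≤ N → ∑ j, ω j * z j ^ k = 0)
    (lam : ℂ) (hlam : ∀ j, lam ≠ z j)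
    (k : ℕ) (hk : k + 1 ≤ N) :
    ∑ j, ω j * z j ^ k / (z j - lam) = lam ^ k * ∑ j, ω j / (z j - lam) :=
  stmt_4_general z ω hquad lam hlam k hk
end

section
/- Suppose the quadrature points z_j ∈ ℂ and weights ω_j ∈ ℂ, j = 1, …, N, satisfy Σ_{j=1}^N ω_j z_j^k = 0 for k = 0, 1, …, N−2, and that z_j ≠ σ_i² for all i, j. Define Ŝ_k := Σ_{j=1}^N ω_j z_j^k (z_j I − AᵀA)^{−1} V_in. Then Ŝ_k = Σ_{i=1}^n σ_i^{2k} (Σ_{j=1}^N ω_j/(z_j − σ_i²)) v_i v_iᵀ V_in = (AᵀA)^k Ŝ_0 for every k = 0, 1, …, N−1. -/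
/-!
Let `vᵢ` be the columns of `V` and `Pᵢ = vᵢ vᵢᵀ`. Orthogonality of `V` gives `∑ᵢ Pᵢ = 1` and
`AᵀA Pᵢ = σᵢ² Pᵢ`, so `(z I - AᵀA)⁻¹ = ∑ᵢ (z - σᵢ²)⁻¹ Pᵢ`. Independently of the spectral picture,
`z (z I - AᵀA)⁻¹ = I + AᵀA (z I - AᵀA)⁻¹`, so raising the power of `zⱼ` in `Ŝ_k` by one produces
`AᵀA Ŝ_k` plus the term `(∑ⱼ ωⱼ zⱼ^k) V_in`, which vanishes while the quadrature is exact; hence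
`Ŝ_k = (AᵀA)^k Ŝ₀`, and `(AᵀA)^k Pᵢ = σᵢ^{2k} Pᵢ` turns this into the spectral formula.
-/

open Matrix

theorem sum_mul_pow_smul_eq_pow_mul_sum_smul {ι K R : Type*} [Fintype ι] [CommRing K] [Ring R]
    [Algebra K R] {a : R} {z ω : ι → K} {r : ι → R} {q : ℕ}
    (hr : ∀ j, (z j • 1 - a) * r j = 1) (hquad : ∀ k < q, ∑ j, ω j * z j ^ k = 0) :
    ∀ k ≤ q, ∑ j, (ω j * z j ^ k) • r j = a ^ k * ∑ j, ω j • r j := by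
  intro k
  induction k with
  | zero => simp
  | succ k ih =>
    intro hk
    have hzr : ∀ j, z j • r j = 1 + a * r j := fun j =>
      sub_eq_iff_eq_add.mp (by rw [← hr j, sub_mul, smul_one_mul])
    calc ∑ j, (ω j * z j ^ (k + 1)) • r j
        = ∑ j, ((ω j * z j ^ k) • (1 : R) + a * ((ω j * z j ^ k) • r j)) := by
          refine Finset.sum_congr rfl fun j _ => ?_
          rw [pow_succ, ← mul_assoc, mul_smul, hzr, smul_add, mul_smul_comm]
      _ = a ^ (k + 1) * ∑ j, ω j • r j := by
          rw [Finset.sum_add_distrib, ← Finset.sum_smul, ← Finset.mul_sum, hquad k hk,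
            ih (by omega), zero_smul, zero_add, ← mul_assoc, ← pow_succ']

section SpectralResolution

variable {K R ι κ : Type*} [Field K] [Ring R] [Algebra K R] [Fintype ι] [Fintype κ]
  {a : R} {p : ι → R} {d : ι → K}

theorem pow_mul_eq_pow_smul_of_mul_eq_smul {x : R} {c : K} (h : a * x = c • x) (k : ℕ) :
    a ^ k * x = c ^ k • x := by
  induction k with
  | zero => simp
  | succ k ih => rw [pow_succ, mul_assoc, h, mul_smul_comm, ih, smul_smul, ← pow_succ']

theorem smul_one_sub_mul_sum_inv_sub_smul_eq_one (hsum : ∑ i, p i = 1)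
    (heig : ∀ i, a * p i = d i • p i) {z : K} (hz : ∀ i, z ≠ d i) :
    (z • 1 - a) * ∑ i, (z - d i)⁻¹ • p i = 1 := by
  rw [Finset.mul_sum]
  refine (Finset.sum_congr rfl fun i _ => ?_).trans hsum
  rw [mul_smul_comm, sub_mul, smul_one_mul, heig, ← sub_smul, smul_smul,
    inv_mul_cancel₀ (sub_ne_zero.2 (hz i)), one_smul]

theorem sum_mul_pow_smul_sum_inv_sub_smul {z ω : κ → K} {q : ℕ} (hsum : ∑ i, p i = 1)
    (heig : ∀ i, a * p i = d i • p i) (hz : ∀ i j, z j ≠ d i)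
    (hquad : ∀ k < q, ∑ j, ω j * z j ^ k = 0) :
    ∀ k ≤ q, ∑ j, (ω j * z j ^ k) • ∑ i, (z j - d i)⁻¹ • p i =
      ∑ i, (d i ^ k * ∑ j, ω j / (z j - d i)) • p i := by
  intro k hk
  rw [sum_mul_pow_smul_eq_pow_mul_sum_smul
    (fun j => smul_one_sub_mul_sum_inv_sub_smul_eq_one hsum heig (hz · j)) hquad k hk]
  simp only [Finset.smul_sum, Finset.mul_sum, mul_smul_comm,
    pow_mul_eq_pow_smul_of_mul_eq_smul (heig _), smul_smul, Finset.sum_smul, div_eq_mul_inv]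
  rw [Finset.sum_comm]
  exact Finset.sum_congr rfl fun i _ => Finset.sum_congr rfl fun j _ => by rw [mul_comm (d i ^ k)]

end SpectralResolution

namespace Matrix

variable {K l m n : Type*} [CommRing K]

theorem sum_vecMulVec_col_row [Fintype m] (A : Matrix l m K) (B : Matrix m n K) :
    ∑ i, vecMulVec (fun a => A a i) (B i) = A * B := by
  ext a b
  simp [Matrix.sum_apply, mul_apply, vecMulVec_apply]

theorem mul_diagonal_mul_transpose_mulVec_col [Fintype n] [DecidableEq n] {W : Matrix n n K}
    (hW : Wᵀ * W = 1) (d : n → K) (i : n) :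
    (W * diagonal d * Wᵀ) *ᵥ (fun a => W a i) = d i • fun a => W a i := by
  have hcol : (fun a => W a i) = W *ᵥ Pi.single i 1 := (mulVec_single_one W i).symm
  rw [hcol, mulVec_mulVec, Matrix.mul_assoc, Matrix.mul_assoc, hW, Matrix.mul_one,
    ← mulVec_mulVec, diagonal_mulVec_single, ← smul_eq_mul, Pi.single_smul', mulVec_smul]

theorem transpose_mul_self_mul_diagonal_mul_transpose [Fintype m] [Fintype n] [DecidableEq n]
    {U : Matrix m n K} (hU : Uᵀ * U = 1) (σ : n → K) (V : Matrix l n K) :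
    (U * diagonal σ * Vᵀ)ᵀ * (U * diagonal σ * Vᵀ) = V * diagonal (fun i => σ i ^ 2) * Vᵀ := by
  simp only [transpose_mul, transpose_transpose, diagonal_transpose, Matrix.mul_assoc]
  rw [← Matrix.mul_assoc Uᵀ, hU, Matrix.one_mul, ← Matrix.mul_assoc (diagonal σ),
    diagonal_mul_diagonal]
  simp only [sq]

theorem transpose_mul_self_mul_vecMulVec_col [Fintype m] [Fintype n] [DecidableEq n]
    {U : Matrix m n K} {V : Matrix n n K} (hU : Uᵀ * U = 1) (hV : Vᵀ * V = 1) (σ : n → K)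
    (i : n) :
    (U * diagonal σ * Vᵀ)ᵀ * (U * diagonal σ * Vᵀ) * vecMulVec (fun a => V a i) (fun a => V a i) =
      σ i ^ 2 • vecMulVec (fun a => V a i) (fun a => V a i) := by
  rw [transpose_mul_self_mul_diagonal_mul_transpose hU, mul_vecMulVec,
    mul_diagonal_mul_transpose_mulVec_col hV, smul_vecMulVec]

end Matrix

theorem stmt_5_general {m n L N : ℕ}
    (U : Matrix (Fin m) (Fin n) ℝ) (V : Matrix (Fin n) (Fin n) ℝ) (σ : Fin n → ℝ)
    (hU : Uᵀ * U = 1) (hV : Vᵀ * V = 1)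
    (A : Matrix (Fin m) (Fin n) ℝ) (hA : A = U * Matrix.diagonal σ * Vᵀ)
    (Vin : Matrix (Fin n) (Fin L) ℝ)
    (z ω : Fin N → ℂ)
    (hzσ : ∀ (i : Fin n) (j : Fin N), z j ≠ ((σ i ^ 2 : ℝ) : ℂ))
    (hquad : ∀ k : ℕ, k + 2 ≤ N → ∑ j, ω j * z j ^ k = 0)
    (Shat : ℕ → Matrix (Fin n) (Fin L) ℂ)
    (hShat : ∀ k : ℕ, Shat k = ∑ j, (ω j * z j ^ k) •
      ((z j • (1 : Matrix (Fin n) (Fin n) ℂ) - (Aᵀ * A).map Complex.ofReal)⁻¹ *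
        Vin.map Complex.ofReal))
    (k : ℕ) (hk : k + 1 ≤ N) :
    Shat k = ∑ i, (((σ i : ℂ)) ^ (2 * k) * ∑ j, ω j / (z j - ((σ i ^ 2 : ℝ) : ℂ))) •
        ((Matrix.vecMulVec (fun a => V a i) (fun a => V a i) * Vin).map Complex.ofReal) ∧
      Shat k = ((Aᵀ * A).map Complex.ofReal) ^ k * Shat 0 := by
  -- `φ X` unfolds to `X.map Complex.ofReal`; the `rfl`s below rely on this.
  let φ := Complex.ofRealHom.mapMatrix (m := Fin n)
  let M := φ (Aᵀ * A)
  let P i := φ (vecMulVec (fun a => V a i) (fun a => V a i))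
  let d i : ℂ := ((σ i ^ 2 : ℝ) : ℂ)
  have hsum : ∑ i, P i = 1 := by
    rw [← map_sum, ← map_one φ]
    exact congrArg φ ((sum_vecMulVec_col_row V Vᵀ).trans (mul_eq_one_comm.mp hV))
  have heig i : M * P i = d i • P i := by
    rw [← map_mul, hA, transpose_mul_self_mul_vecMulVec_col hU hV]
    exact Matrix.map_smul' _ _ _ Complex.ofReal_mul
  have hres j : (z j • 1 - M) * ∑ i, (z j - d i)⁻¹ • P i = 1 :=
    smul_one_sub_mul_sum_inv_sub_smul_eq_one hsum heig fun i => hzσ i j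
  have hShat' k : Shat k =
      (∑ j, (ω j * z j ^ k) • ∑ i, (z j - d i)⁻¹ • P i) * Vin.map Complex.ofReal := by
    simp only [hShat, Matrix.sum_mul, Matrix.smul_mul, ← fun j => inv_eq_right_inv (hres j)]
    rfl
  have hquad' : ∀ k < N - 1, ∑ j, ω j * z j ^ k = 0 := fun k hk => hquad k (by omega)
  constructor
  · rw [hShat', sum_mul_pow_smul_sum_inv_sub_smul hsum heig hzσ hquad' k
      (by omega), Matrix.sum_mul]
    refine Finset.sum_congr rfl fun i _ => ?_
    rw [Matrix.smul_mul]
    congr 1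
    · push_cast [d, pow_mul]
      rfl
    · exact (Matrix.map_mul (f := Complex.ofRealHom)).symm
  · rw [hShat', hShat', sum_mul_pow_smul_eq_pow_mul_sum_smul hres hquad' k (by omega)]
    simp only [pow_zero, mul_one, Matrix.mul_assoc]
    rfl

/-- With quadrature points/weights satisfying
`∑ⱼ ωⱼ zⱼ^k = 0` for `k = 0, …, N−2`, the numerically integrated moment matrices
`Ŝ_k = ∑ⱼ ωⱼ zⱼ^k (zⱼ I − AᵀA)⁻¹ V_in` satisfy, for `k = 0, …, N−1`,
`Ŝ_k = ∑ᵢ σᵢ^{2k} (∑ⱼ ωⱼ/(zⱼ − σᵢ²)) vᵢvᵢᵀ V_in = (AᵀA)^k Ŝ₀`. -/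
theorem stmt_5 {m n L N : ℕ} (hmn : n ≤ m) (hL : 0 < L) (hN : 0 < N)
    (U : Matrix (Fin m) (Fin n) ℝ) (V : Matrix (Fin n) (Fin n) ℝ) (σ : Fin n → ℝ)
    (hU : Uᵀ * U = 1) (hV : Vᵀ * V = 1) (hσ : ∀ i, 0 ≤ σ i)
    (A : Matrix (Fin m) (Fin n) ℝ) (hA : A = U * Matrix.diagonal σ * Vᵀ)
    (Vin : Matrix (Fin n) (Fin L) ℝ)
    (z ω : Fin N → ℂ)
    (hzσ : ∀ (i : Fin n) (j : Fin N), z j ≠ ((σ i ^ 2 : ℝ) : ℂ))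
    (hquad : ∀ k : ℕ, k + 2 ≤ N → ∑ j, ω j * z j ^ k = 0)
    (Shat : ℕ → Matrix (Fin n) (Fin L) ℂ)
    (hShat : ∀ k : ℕ, Shat k = ∑ j, (ω j * z j ^ k) •
      ((z j • (1 : Matrix (Fin n) (Fin n) ℂ) - (Aᵀ * A).map Complex.ofReal)⁻¹ *
        Vin.map Complex.ofReal))
    (k : ℕ) (hk : k + 1 ≤ N) :
    Shat k = ∑ i, (((σ i : ℂ)) ^ (2 * k) * ∑ j, ω j / (z j - ((σ i ^ 2 : ℝ) : ℂ))) •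
        ((Matrix.vecMulVec (fun a => V a i) (fun a => V a i) * Vin).map Complex.ofReal) ∧
      Shat k = ((Aᵀ * A).map Complex.ofReal) ^ k * Shat 0 :=
  stmt_5_general U V σ hU hV A hA Vin z ω hzσ hquad Shat hShat k hk
end

section
/- Let z_j ∈ ℂ and ω_j ∈ ℂ, j = 1, …, N, satisfy z_j ≠ σ_i² for all i, j, and define the filter function f(σ) := Σ_{j=1}^N ω_j/(z_j − σ²). Define Ŝ_0^{(0)} := V_in, Ŝ_0^{(ν)} := Σ_{j=1}^N ω_j (z_j I − AᵀA)^{−1} Ŝ_0^{(ν−1)} for ν = 1, …, ℓ−1, and Ŝ_k^{(ℓ)} := Σ_{j=1}^N ω_j z_j^k (z_j I − AᵀA)^{−1} Ŝ_0^{(ℓ−1)}. Suppose additionally Σ_{j=1}^N ω_j z_j^k = 0 for k = 0, 1, …, N−2. Then for every k = 0, …, N−1, Ŝ_k^{(ℓ)} = Σ_{i=1}^n σ_i^{2k} (f(σ_i))^ℓ v_i v_iᵀ V_in = V Σ^{2k} (f(Σ))^ℓ Vᵀ V_in, where f(Σ) := diag(f(σ_1), …, f(σ_n)). -/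
/-!
Since `UᵀU = 1`, `AᵀA = V diag(σᵢ²) Vᵀ`, and `d ↦ V diag(d) Vᵀ` is an algebra homomorphism
`(Fin n → ℂ) → Mat_n(ℂ)`. Hence every resolvent `(zI − AᵀA)⁻¹` is `V diag((z − σᵢ²)⁻¹) Vᵀ`, each
`Ŝ₀⁽ᵛ⁾` is `V f(Σ)^ν Vᵀ V_in`, and the claim reduces to the scalar identity
`∑ⱼ ωⱼ zⱼᵏ / (zⱼ − s) = sᵏ f(s)`: writing `zᵏ = (z − s) q(z) + sᵏ` with `deg q < k`, the
vanishing moments `∑ⱼ ωⱼ zⱼᵗ = 0` (`t ≤ N − 2`) kill the contribution of `q`.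
-/

open Matrix

theorem Finset.sum_mul_pow_div_sub_eq_pow_mul {K ι : Type*} [Field K] (s : Finset ι)
    {ω z : ι → K} {x : K} {k : ℕ} (hz : ∀ j ∈ s, z j ≠ x)
    (hmom : ∀ t < k, ∑ j ∈ s, ω j * z j ^ t = 0) :
    ∑ j ∈ s, ω j * z j ^ k / (z j - x) = x ^ k * ∑ j ∈ s, ω j / (z j - x) := by
  have hsplit : ∀ j ∈ s, ω j * z j ^ k / (z j - x) =
      ∑ t ∈ range k, ω j * z j ^ t * x ^ (k - 1 - t) + x ^ k * (ω j / (z j - x)) := by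
    intro j hj
    have hne : z j - x ≠ 0 := sub_ne_zero.mpr (hz j hj)
    calc ω j * z j ^ k / (z j - x)
        = ω j * ((z j ^ k - x ^ k) / (z j - x)) + x ^ k * (ω j / (z j - x)) := by ring
      _ = _ := by
        rw [← geom_sum₂_mul, mul_div_cancel_right₀ _ hne, mul_sum]
        simp only [mul_assoc]
  rw [sum_congr rfl hsplit, sum_add_distrib, sum_comm, ← mul_sum, add_eq_right]
  refine sum_eq_zero fun t ht => ?_
  rw [← sum_mul, hmom t (mem_range.mp ht), zero_mul]

theorem Matrix.mul_diagonal_mul_transpose {n R : Type*} [Fintype n] [DecidableEq n]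
    [CommSemiring R] (P : Matrix n n R) (g : n → R) :
    P * diagonal g * Pᵀ = ∑ i, g i • vecMulVec (fun a => P a i) (fun a => P a i) := by
  ext a b
  simp only [mul_apply, diagonal_apply, mul_ite, mul_zero, Finset.sum_ite_eq', Finset.mem_univ,
    ↓reduceIte, transpose_apply, sum_apply, smul_apply, vecMulVec_apply, smul_eq_mul]
  exact Finset.sum_congr rfl fun _ _ => by ring

theorem Matrix.transpose_mul_self_eq_of_eq_mul_diagonal_mul {m n R : Type*} [Fintype m] [Fintype n]
    [DecidableEq n] [CommRing R] {U : Matrix m n R} {V : Matrix n n R} {σ : n → R}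
    (hU : Uᵀ * U = 1) {A : Matrix m n R} (hA : A = U * diagonal σ * Vᵀ) :
    Aᵀ * A = V * diagonal (fun i => σ i ^ 2) * Vᵀ := by
  subst hA
  simp only [transpose_mul, transpose_transpose, diagonal_transpose, Matrix.mul_assoc]
  rw [← Matrix.mul_assoc Uᵀ, hU, Matrix.one_mul, ← Matrix.mul_assoc (diagonal σ),
    diagonal_mul_diagonal]
  simp [sq]

theorem Matrix.map_mul_ofReal {l m n : Type*} [Fintype m] (M : Matrix l m ℝ) (N : Matrix m n ℝ) :
    (M * N).map Complex.ofReal = M.map Complex.ofReal * N.map Complex.ofReal :=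
  Matrix.map_mul (f := Complex.ofRealHom)

section Resolvent

variable {K n ι L : Type*} [Field K] [Fintype n] [DecidableEq n] [Fintype ι]

noncomputable def Matrix.conjDiagonal (u : (Matrix n n K)ˣ) : (n → K) →ₐ[K] Matrix n n K :=
  (MulSemiringAction.toAlgEquiv K (Matrix n n K) (ConjAct.toConjAct u)).toAlgHom.comp
    (diagonalAlgHom K)

theorem Matrix.conjDiagonal_apply (u : (Matrix n n K)ˣ) (d : n → K) :
    conjDiagonal u d = (u : Matrix n n K) * diagonal d * (↑u⁻¹ : Matrix n n K) := rfl

variable (ψ : (n → K) →ₐ[K] Matrix n n K)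

theorem AlgHom.inv_smul_one_sub_apply {z : K} {d : n → K} (h : ∀ i, z ≠ d i) :
    (z • 1 - ψ d)⁻¹ = ψ (fun i => (z - d i)⁻¹) := by
  refine inv_eq_right_inv ?_
  rw [← map_one ψ, ← map_smul, ← map_sub, ← map_mul]
  congr 1
  funext i
  simp [sub_ne_zero.mpr (h i)]

theorem AlgHom.sum_smul_inv_smul_one_sub_mul {z : ι → K} {d : n → K} (h : ∀ i j, z j ≠ d i)
    (c : ι → K) (X : Matrix n L K) :
    ∑ j, c j • ((z j • 1 - ψ d)⁻¹ * X) = ψ (fun i => ∑ j, c j / (z j - d i)) * X := by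
  simp_rw [ψ.inv_smul_one_sub_apply (h · _), ← Matrix.smul_mul, ← Matrix.sum_mul, ← map_smul,
    ← map_sum]
  congr 2
  funext i
  simp [Finset.sum_apply, div_eq_mul_inv]

theorem AlgHom.eq_map_pow_mul_of_succ_eq_sum_resolvent {z ω : ι → K} {d f : n → K}
    (h : ∀ i j, z j ≠ d i) (hf : ∀ i, f i = ∑ j, ω j / (z j - d i))
    {S : ℕ → Matrix n L K} (hS : ∀ ν, S (ν + 1) = ∑ j, ω j • ((z j • 1 - ψ d)⁻¹ * S ν))
    (ν : ℕ) : S ν = ψ (f ^ ν) * S 0 := by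
  induction ν with
  | zero => rw [pow_zero, map_one, Matrix.one_mul]
  | succ ν ih =>
    rw [hS ν, ih, ψ.sum_smul_inv_smul_one_sub_mul h, ← Matrix.mul_assoc, ← map_mul,
      show (fun i => ∑ j, ω j / (z j - d i)) = f from funext fun i => (hf i).symm, pow_succ']

theorem AlgHom.sum_pow_smul_resolvent_mul_eq {z ω : ι → K} {d f : n → K}
    (h : ∀ i j, z j ≠ d i) (hf : ∀ i, f i = ∑ j, ω j / (z j - d i))
    {S : ℕ → Matrix n L K} (hS : ∀ ν, S (ν + 1) = ∑ j, ω j • ((z j • 1 - ψ d)⁻¹ * S ν))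
    {k ℓ : ℕ} (hℓ : 0 < ℓ) (hmom : ∀ t < k, ∑ j, ω j * z j ^ t = 0) :
    ∑ j, (ω j * z j ^ k) • ((z j • 1 - ψ d)⁻¹ * S (ℓ - 1)) = ψ (d ^ k * f ^ ℓ) * S 0 := by
  rw [ψ.eq_map_pow_mul_of_succ_eq_sum_resolvent h hf hS, ψ.sum_smul_inv_smul_one_sub_mul h,
    ← Matrix.mul_assoc, ← map_mul]
  congr 2
  funext i
  simp only [Pi.mul_apply, Pi.pow_apply]
  rw [Finset.sum_mul_pow_div_sub_eq_pow_mul _ (fun j _ => h i j) hmom, ← hf, mul_assoc,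
    ← pow_succ', Nat.sub_add_cancel hℓ]

end Resolvent

theorem stmt_6_general {m n L N : ℕ}
    (ℓ : ℕ) (hℓ : 0 < ℓ)
    (U : Matrix (Fin m) (Fin n) ℝ) (V : Matrix (Fin n) (Fin n) ℝ) (σ : Fin n → ℝ)
    (hU : Uᵀ * U = 1) (hV : Vᵀ * V = 1)
    (A : Matrix (Fin m) (Fin n) ℝ) (hA : A = U * Matrix.diagonal σ * Vᵀ)
    (Vin : Matrix (Fin n) (Fin L) ℝ)
    (z ω : Fin N → ℂ)
    (hzσ : ∀ (i : Fin n) (j : Fin N), z j ≠ ((σ i ^ 2 : ℝ) : ℂ))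
    (hquad : ∀ k : ℕ, k + 2 ≤ N → ∑ j, ω j * z j ^ k = 0)
    (f : Fin n → ℂ) (hf : ∀ i, f i = ∑ j, ω j / (z j - ((σ i ^ 2 : ℝ) : ℂ)))
    (S0 : ℕ → Matrix (Fin n) (Fin L) ℂ)
    (hS0zero : S0 0 = Vin.map Complex.ofReal)
    (hS0succ : ∀ ν : ℕ, S0 (ν + 1) = ∑ j, ω j •
      ((z j • (1 : Matrix (Fin n) (Fin n) ℂ) - (Aᵀ * A).map Complex.ofReal)⁻¹ * S0 ν))
    (k : ℕ) (hk : k + 1 ≤ N) :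
    (∑ j, (ω j * z j ^ k) •
        ((z j • (1 : Matrix (Fin n) (Fin n) ℂ) - (Aᵀ * A).map Complex.ofReal)⁻¹ *
          S0 (ℓ - 1))) =
      ∑ i, (((σ i : ℂ)) ^ (2 * k) * f i ^ ℓ) •
        ((Matrix.vecMulVec (fun a => V a i) (fun a => V a i) * Vin).map Complex.ofReal) ∧
    (∑ j, (ω j * z j ^ k) •
        ((z j • (1 : Matrix (Fin n) (Fin n) ℂ) - (Aᵀ * A).map Complex.ofReal)⁻¹ *
          S0 (ℓ - 1))) =
      V.map Complex.ofReal * (Matrix.diagonal fun i => ((σ i : ℝ) : ℂ)) ^ (2 * k) *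
        (Matrix.diagonal f) ^ ℓ * (Vᵀ).map Complex.ofReal * Vin.map Complex.ofReal := by
  let u : (Matrix (Fin n) (Fin n) ℂ)ˣ :=
    Units.map (Complex.ofRealHom.mapMatrix (m := Fin n)).toMonoidHom
      ⟨V, Vᵀ, mul_eq_one_comm.mp hV, hV⟩
  have hM : (Aᵀ * A).map Complex.ofReal = conjDiagonal u (fun i => ((σ i ^ 2 : ℝ) : ℂ)) := by
    rw [transpose_mul_self_eq_of_eq_mul_diagonal_mul hU hA, conjDiagonal_apply, map_mul_ofReal,
      map_mul_ofReal, diagonal_map Complex.ofReal_zero]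
    rfl
  rw [hM, (conjDiagonal u).sum_pow_smul_resolvent_mul_eq hzσ hf (hM ▸ hS0succ) hℓ
    (fun t ht => hquad t (by omega)), hS0zero, conjDiagonal_apply]
  refine ⟨?_, ?_⟩
  · have hinv : (↑u⁻¹ : Matrix (Fin n) (Fin n) ℂ) = (↑u : Matrix (Fin n) (Fin n) ℂ)ᵀ := rfl
    rw [hinv, mul_diagonal_mul_transpose, Matrix.sum_mul]
    refine Finset.sum_congr rfl fun i _ => ?_
    rw [Matrix.smul_mul, map_mul_ofReal]
    congr 1
    · simp [pow_mul]
    · congr 1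
      ext a b
      simp [u, vecMulVec_apply]
  · rw [diagonal_pow, diagonal_pow, Matrix.mul_assoc (V.map _), diagonal_mul_diagonal]
    congr 4
    funext i
    simp [pow_mul]

/-- For the iterated quadrature construction
`Ŝ₀⁽⁰⁾ = V_in`, `Ŝ₀⁽ᵛ⁾ = ∑ⱼ ωⱼ (zⱼI − AᵀA)⁻¹ Ŝ₀⁽ᵛ⁻¹⁾`,
`Ŝ_k⁽ˡ⁾ = ∑ⱼ ωⱼ zⱼ^k (zⱼI − AᵀA)⁻¹ Ŝ₀⁽ˡ⁻¹⁾`, under the vanishing-moment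
condition `∑ⱼ ωⱼ zⱼ^k = 0` (`k = 0, …, N−2`), one has for `k = 0, …, N−1`
`Ŝ_k⁽ˡ⁾ = ∑ᵢ σᵢ^{2k} f(σᵢ)^ℓ vᵢvᵢᵀ V_in = V Σ^{2k} f(Σ)^ℓ Vᵀ V_in`,
where `f(σ) = ∑ⱼ ωⱼ/(zⱼ − σ²)`. -/
theorem stmt_6 {m n L N : ℕ} (hmn : n ≤ m) (hL : 0 < L) (hN : 0 < N)
    (ℓ : ℕ) (hℓ : 0 < ℓ)
    (U : Matrix (Fin m) (Fin n) ℝ) (V : Matrix (Fin n) (Fin n) ℝ) (σ : Fin n → ℝ)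
    (hU : Uᵀ * U = 1) (hV : Vᵀ * V = 1) (hσ : ∀ i, 0 ≤ σ i)
    (A : Matrix (Fin m) (Fin n) ℝ) (hA : A = U * Matrix.diagonal σ * Vᵀ)
    (Vin : Matrix (Fin n) (Fin L) ℝ)
    (z ω : Fin N → ℂ)
    (hzσ : ∀ (i : Fin n) (j : Fin N), z j ≠ ((σ i ^ 2 : ℝ) : ℂ))
    (hquad : ∀ k : ℕ, k + 2 ≤ N → ∑ j, ω j * z j ^ k = 0)
    (f : Fin n → ℂ) (hf : ∀ i, f i = ∑ j, ω j / (z j - ((σ i ^ 2 : ℝ) : ℂ)))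
    (S0 : ℕ → Matrix (Fin n) (Fin L) ℂ)
    (hS0zero : S0 0 = Vin.map Complex.ofReal)
    (hS0succ : ∀ ν : ℕ, S0 (ν + 1) = ∑ j, ω j •
      ((z j • (1 : Matrix (Fin n) (Fin n) ℂ) - (Aᵀ * A).map Complex.ofReal)⁻¹ * S0 ν))
    (k : ℕ) (hk : k + 1 ≤ N) :
    (∑ j, (ω j * z j ^ k) •
        ((z j • (1 : Matrix (Fin n) (Fin n) ℂ) - (Aᵀ * A).map Complex.ofReal)⁻¹ *
          S0 (ℓ - 1))) =
      ∑ i, (((σ i : ℂ)) ^ (2 * k) * f i ^ ℓ) •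
        ((Matrix.vecMulVec (fun a => V a i) (fun a => V a i) * Vin).map Complex.ofReal) ∧
    (∑ j, (ω j * z j ^ k) •
        ((z j • (1 : Matrix (Fin n) (Fin n) ℂ) - (Aᵀ * A).map Complex.ofReal)⁻¹ *
          S0 (ℓ - 1))) =
      V.map Complex.ofReal * (Matrix.diagonal fun i => ((σ i : ℝ) : ℂ)) ^ (2 * k) *
        (Matrix.diagonal f) ^ ℓ * (Vᵀ).map Complex.ofReal * Vin.map Complex.ofReal :=
  stmt_6_general ℓ hℓ U V σ hU hV A hA Vin z ω hzσ hquad f hf S0 hS0zero hS0succ k hk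
end

section
/- Under the assumptions that z_j ≠ σ_i² for all i, j and Σ_{j=1}^N ω_j z_j^k = 0 for k = 0, 1, …, N−2, define Ŝ^{(ℓ)} := [Ŝ_0^{(ℓ)}, Ŝ_1^{(ℓ)}, …, Ŝ_{M−1}^{(ℓ)}] with the matrices Ŝ_k^{(ℓ)} as in the iterated quadrature construction, and suppose M ≤ N. Then Ŝ^{(ℓ)} = F^ℓ K, where F := V f(Σ) Vᵀ with f(Σ) := diag(f(σ_1), …, f(σ_n)), f(σ) := Σ_{j=1}^N ω_j/(z_j − σ²), and K := [V_in, (AᵀA)V_in, …, (AᵀA)^{M−1} V_in]. -/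
/-!
Since `AᵀA = V Σ² Vᵀ` with `V` orthogonal, each resolvent `(z_j I - AᵀA)⁻¹` is
`V (z_j - Σ²)⁻¹ Vᵀ`, so `F = ∑ⱼ ωⱼ (z_j I - AᵀA)⁻¹` and `Ŝ₀⁽ᵛ⁾ = Fᵛ V_in`. With `B = AᵀA`, the
geometric-sum identity `z^k - B^k = (∑_{i<k} z^i B^{k-1-i}) (z - B)` turns the `k`-th moment
`∑ⱼ ωⱼ zⱼ^k (z_j I - B)⁻¹` into `B^k F` plus a polynomial in `B` whose coefficients are the
moments `∑ⱼ ωⱼ zⱼ^i` with `i < k ≤ N - 1`, all zero. As `F` and `B` commute,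
`Ŝ_k⁽ˡ⁾ = B^k F F^{ℓ-1} V_in = F^ℓ B^k V_in`.
-/

open Finset

namespace Matrix

section CommRing

variable {ι R : Type*} [Fintype ι] [CommRing R]

theorem sum_smul_mul {β κ μ : Type*} (t : Finset β) (c : β → R) (X : β → Matrix κ ι R)
    (Y : Matrix ι μ R) : ∑ j ∈ t, c j • (X j * Y) = (∑ j ∈ t, c j • X j) * Y := by
  simp only [Matrix.sum_mul, Matrix.smul_mul]

theorem svd_transpose_mul_self {κ : Type*} [Fintype κ] [DecidableEq ι] {U : Matrix κ ι R}
    (hU : Uᵀ * U = 1) (σ : ι → R) (V : Matrix ι ι R) :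
    (U * diagonal σ * Vᵀ)ᵀ * (U * diagonal σ * Vᵀ) = V * diagonal (fun i => σ i ^ 2) * Vᵀ := by
  calc (U * diagonal σ * Vᵀ)ᵀ * (U * diagonal σ * Vᵀ)
      = V * diagonal σ * (Uᵀ * U) * diagonal σ * Vᵀ := by
        simp only [transpose_mul, transpose_transpose, diagonal_transpose, Matrix.mul_assoc]
    _ = V * diagonal (fun i => σ i ^ 2) * Vᵀ := by
        simp only [hU, Matrix.mul_one, Matrix.mul_assoc, diagonal_mul_diagonal, sq]

variable [DecidableEq ι]

theorem pow_smul_inv_smul_one_sub {B : Matrix ι ι R} {z : R} (hz : IsUnit (z • 1 - B).det)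
    (k : ℕ) :
    z ^ k • (z • 1 - B)⁻¹
      = B ^ k * (z • 1 - B)⁻¹ + ∑ i ∈ range k, z ^ i • B ^ (k - 1 - i) := by
  have hgeom := congrArg (· * (z • 1 - B)⁻¹)
    (((Commute.one_left B).smul_left z).geom_sum₂_mul k)
  simp only [Matrix.mul_assoc, mul_nonsing_inv _ hz, Matrix.mul_one, smul_pow, one_pow,
    Matrix.sub_mul, smul_mul_assoc, one_mul] at hgeom
  rw [hgeom, add_sub_cancel]

theorem sum_mul_pow_smul_inv_smul_one_sub {β : Type*} (t : Finset β) {B : Matrix ι ι R}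
    {z ω : β → R} (hz : ∀ j ∈ t, IsUnit (z j • 1 - B).det) {k : ℕ}
    (hω : ∀ i < k, ∑ j ∈ t, ω j * z j ^ i = 0) :
    ∑ j ∈ t, (ω j * z j ^ k) • (z j • 1 - B)⁻¹ = B ^ k * ∑ j ∈ t, ω j • (z j • 1 - B)⁻¹ := by
  calc ∑ j ∈ t, (ω j * z j ^ k) • (z j • 1 - B)⁻¹
      = ∑ j ∈ t, ω j • (B ^ k * (z j • 1 - B)⁻¹ + ∑ i ∈ range k, z j ^ i • B ^ (k - 1 - i)) :=
        sum_congr rfl fun j hj => by rw [mul_smul, pow_smul_inv_smul_one_sub (hz j hj)]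
    _ = B ^ k * ∑ j ∈ t, ω j • (z j • 1 - B)⁻¹
          + ∑ i ∈ range k, (∑ j ∈ t, ω j * z j ^ i) • B ^ (k - 1 - i) := by
        simp only [smul_add, sum_add_distrib, Finset.mul_sum, Matrix.mul_smul, smul_sum,
          Finset.sum_smul, mul_smul]
        rw [sum_comm]
    _ = B ^ k * ∑ j ∈ t, ω j • (z j • 1 - B)⁻¹ := by
        rw [sum_eq_zero (s := range k) fun i hi => by rw [hω i (mem_range.mp hi), zero_smul],
          add_zero]

theorem conj_diagonal_mul_conj_diagonal {P : Matrix ι ι R} (hP : Pᵀ * P = 1) (d e : ι → R) :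
    P * diagonal d * Pᵀ * (P * diagonal e * Pᵀ) = P * diagonal (d * e) * Pᵀ := by
  calc P * diagonal d * Pᵀ * (P * diagonal e * Pᵀ)
      = P * diagonal d * (Pᵀ * P) * diagonal e * Pᵀ := by simp only [Matrix.mul_assoc]
    _ = P * diagonal (d * e) * Pᵀ := by
        rw [hP, Matrix.mul_one, Matrix.mul_assoc P, diagonal_mul_diagonal]
        rfl

theorem commute_conj_diagonal {P : Matrix ι ι R} (hP : Pᵀ * P = 1) (d e : ι → R) :
    Commute (P * diagonal d * Pᵀ) (P * diagonal e * Pᵀ) := by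
  rw [Commute, SemiconjBy, conj_diagonal_mul_conj_diagonal hP,
    conj_diagonal_mul_conj_diagonal hP, mul_comm]

theorem smul_one_sub_conj_diagonal {P : Matrix ι ι R} (hP : Pᵀ * P = 1) (z : R) (s : ι → R) :
    z • 1 - P * diagonal s * Pᵀ = P * diagonal (fun i => z - s i) * Pᵀ := by
  rw [← diagonal_sub, Matrix.mul_sub, Matrix.sub_mul, ← smul_one_eq_diagonal, Matrix.mul_smul,
    Matrix.mul_one, Matrix.smul_mul, mul_eq_one_comm.mp hP]

theorem sum_smul_conj_diagonal {β : Type*} (t : Finset β) (P : Matrix ι ι R) (c : β → R)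
    (d : β → ι → R) :
    ∑ j ∈ t, c j • (P * diagonal (d j) * Pᵀ)
      = P * diagonal (fun i => ∑ j ∈ t, c j * d j i) * Pᵀ := by
  have hd : (fun i => ∑ j ∈ t, c j * d j i) = ∑ j ∈ t, c j • d j := by
    ext i
    simp [Finset.sum_apply]
  rw [hd, ← diagonalAddMonoidHom_apply, map_sum, Finset.mul_sum, Finset.sum_mul]
  exact sum_congr rfl fun j _ => by
    rw [diagonalAddMonoidHom_apply, diagonal_smul, Matrix.mul_smul, Matrix.smul_mul]

theorem map_conj_diagonal {S : Type*} [CommRing S] (f : R →+* S) (P : Matrix ι ι R)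
    (d : ι → R) :
    (P * diagonal d * Pᵀ).map f = P.map f * diagonal (fun i => f (d i)) * (P.map f)ᵀ := by
  rw [Matrix.map_mul, Matrix.map_mul, diagonal_map f.map_zero, transpose_map]

theorem transpose_map_mul_map {S : Type*} [CommRing S] (f : R →+* S) {P : Matrix ι ι R}
    (hP : Pᵀ * P = 1) : (P.map f)ᵀ * P.map f = 1 := by
  rw [← transpose_map, ← Matrix.map_mul, hP, Matrix.map_one _ f.map_zero f.map_one]

end CommRing

theorem smul_one_sub_conj_diagonal_mul_conj_diagonal_inv {ι K : Type*} [Fintype ι]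
    [DecidableEq ι] [Field K] {P : Matrix ι ι K} (hP : Pᵀ * P = 1) {z : K} {s : ι → K}
    (hz : ∀ i, z ≠ s i) :
    (z • 1 - P * diagonal s * Pᵀ) * (P * diagonal (fun i => (z - s i)⁻¹) * Pᵀ) = 1 := by
  rw [smul_one_sub_conj_diagonal hP, conj_diagonal_mul_conj_diagonal hP,
    show ((fun i => z - s i) * fun i => (z - s i)⁻¹) = fun _ => 1 from
      funext fun i => mul_inv_cancel₀ (sub_ne_zero.mpr (hz i)),
    diagonal_one, Matrix.mul_one, mul_eq_one_comm.mp hP]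

end Matrix

open Matrix

theorem stmt_7_general {m n L M N : ℕ}
    (hMN : M ≤ N) (ℓ : ℕ) (hℓ : 0 < ℓ)
    (U : Matrix (Fin m) (Fin n) ℝ) (V : Matrix (Fin n) (Fin n) ℝ) (σ : Fin n → ℝ)
    (hU : Uᵀ * U = 1) (hV : Vᵀ * V = 1)
    (A : Matrix (Fin m) (Fin n) ℝ) (hA : A = U * Matrix.diagonal σ * Vᵀ)
    (Vin : Matrix (Fin n) (Fin L) ℝ)
    (z ω : Fin N → ℂ)
    (hzσ : ∀ (i : Fin n) (j : Fin N), z j ≠ ((σ i ^ 2 : ℝ) : ℂ))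
    (hquad : ∀ k : ℕ, k + 2 ≤ N → ∑ j, ω j * z j ^ k = 0)
    (f : Fin n → ℂ) (hf : ∀ i, f i = ∑ j, ω j / (z j - ((σ i ^ 2 : ℝ) : ℂ)))
    (S0 : ℕ → Matrix (Fin n) (Fin L) ℂ)
    (hS0zero : S0 0 = Vin.map Complex.ofReal)
    (hS0succ : ∀ ν : ℕ, S0 (ν + 1) = ∑ j, ω j •
      ((z j • (1 : Matrix (Fin n) (Fin n) ℂ) - (Aᵀ * A).map Complex.ofReal)⁻¹ * S0 ν))
    (S : Matrix (Fin n) (Fin M × Fin L) ℂ)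
    (hS : ∀ (k : Fin M) (i : Fin n) (j : Fin L),
      S i (k, j) = (∑ j', (ω j' * z j' ^ (k : ℕ)) •
        ((z j' • (1 : Matrix (Fin n) (Fin n) ℂ) - (Aᵀ * A).map Complex.ofReal)⁻¹ *
          S0 (ℓ - 1))) i j)
    (F : Matrix (Fin n) (Fin n) ℂ)
    (hF : F = V.map Complex.ofReal * Matrix.diagonal f * (Vᵀ).map Complex.ofReal)
    (K : Matrix (Fin n) (Fin M × Fin L) ℂ)
    (hK : ∀ (k : Fin M) (i : Fin n) (j : Fin L),
      K i (k, j) = ((((Aᵀ * A).map Complex.ofReal) ^ (k : ℕ)) *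
        Vin.map Complex.ofReal) i j) :
    S = F ^ ℓ * K := by
  obtain ⟨ℓ, rfl⟩ := Nat.exists_eq_add_one_of_ne_zero hℓ.ne'
  rw [transpose_map] at hF
  set W := V.map Complex.ofReal
  set s : Fin n → ℂ := fun i => ((σ i ^ 2 : ℝ) : ℂ)
  have hW : Wᵀ * W = 1 := transpose_map_mul_map Complex.ofRealHom hV
  have hB : (Aᵀ * A).map Complex.ofReal = W * diagonal s * Wᵀ := by
    rw [hA, svd_transpose_mul_self hU]
    exact map_conj_diagonal Complex.ofRealHom V _
  generalize (Aᵀ * A).map Complex.ofReal = B at hB hS0succ hS hK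
  have hinv : ∀ j, (z j • 1 - B) * (W * diagonal (fun i => (z j - s i)⁻¹) * Wᵀ) = 1 :=
    fun j => hB ▸ smul_one_sub_conj_diagonal_mul_conj_diagonal_inv hW fun i => hzσ i j
  have hFres : F = ∑ j, ω j • (z j • 1 - B)⁻¹ := by
    have hfs : f = fun i => ∑ j, ω j * (z j - s i)⁻¹ :=
      funext fun i => by simp only [hf, div_eq_mul_inv, s]
    simp only [inv_eq_right_inv (hinv _), sum_smul_conj_diagonal, hF, hfs]
  have hS0 : ∀ ν, S0 ν = F ^ ν * Vin.map Complex.ofReal := by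
    intro ν
    induction ν with
    | zero => rw [hS0zero, pow_zero, Matrix.one_mul]
    | succ ν ih => rw [hS0succ, ih, pow_succ', Matrix.mul_assoc, hFres, sum_smul_mul]
  have hmoment : ∀ k : Fin M, ∑ j, (ω j * z j ^ (k : ℕ)) • (z j • 1 - B)⁻¹ = B ^ (k : ℕ) * F :=
    fun k => hFres ▸ sum_mul_pow_smul_inv_smul_one_sub univ
      (fun j _ => isUnit_det_of_right_inverse (hinv j)) fun i hi => hquad i (by omega)
  have hFB : Commute F B := hF ▸ hB ▸ commute_conj_diagonal hW f s
  ext i ⟨k, j⟩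
  have hK' : (F ^ (ℓ + 1) * K) i (k, j)
      = (F ^ (ℓ + 1) * (B ^ (k : ℕ) * Vin.map Complex.ofReal)) i j := by
    simp only [mul_apply, hK]
  rw [hS, hK', Nat.add_sub_cancel, hS0, sum_smul_mul, hmoment, Matrix.mul_assoc,
    ← Matrix.mul_assoc F, ← pow_succ', ← Matrix.mul_assoc, ← (hFB.pow_pow _ _).eq,
    Matrix.mul_assoc]

/-- Under the vanishing-moment condition on the quadrature rule,
the iterated complex-moment matrix `Ŝ⁽ˡ⁾ = [Ŝ₀⁽ˡ⁾, …, Ŝ_{M−1}⁽ˡ⁾]` (with `M ≤ N`)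
factors as `Ŝ⁽ˡ⁾ = Fˡ K`, where `F = V f(Σ) Vᵀ`, `f(σ) = ∑ⱼ ωⱼ/(zⱼ − σ²)`, and
`K = [V_in, (AᵀA)V_in, …, (AᵀA)^{M−1} V_in]`. -/
theorem stmt_7 {m n L M N : ℕ} (hmn : n ≤ m) (hL : 0 < L) (hM : 0 < M) (hN : 0 < N)
    (hMN : M ≤ N) (ℓ : ℕ) (hℓ : 0 < ℓ)
    (U : Matrix (Fin m) (Fin n) ℝ) (V : Matrix (Fin n) (Fin n) ℝ) (σ : Fin n → ℝ)
    (hU : Uᵀ * U = 1) (hV : Vᵀ * V = 1) (hσ : ∀ i, 0 ≤ σ i)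
    (A : Matrix (Fin m) (Fin n) ℝ) (hA : A = U * Matrix.diagonal σ * Vᵀ)
    (Vin : Matrix (Fin n) (Fin L) ℝ)
    (z ω : Fin N → ℂ)
    (hzσ : ∀ (i : Fin n) (j : Fin N), z j ≠ ((σ i ^ 2 : ℝ) : ℂ))
    (hquad : ∀ k : ℕ, k + 2 ≤ N → ∑ j, ω j * z j ^ k = 0)
    (f : Fin n → ℂ) (hf : ∀ i, f i = ∑ j, ω j / (z j - ((σ i ^ 2 : ℝ) : ℂ)))
    (S0 : ℕ → Matrix (Fin n) (Fin L) ℂ)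
    (hS0zero : S0 0 = Vin.map Complex.ofReal)
    (hS0succ : ∀ ν : ℕ, S0 (ν + 1) = ∑ j, ω j •
      ((z j • (1 : Matrix (Fin n) (Fin n) ℂ) - (Aᵀ * A).map Complex.ofReal)⁻¹ * S0 ν))
    (S : Matrix (Fin n) (Fin M × Fin L) ℂ)
    (hS : ∀ (k : Fin M) (i : Fin n) (j : Fin L),
      S i (k, j) = (∑ j', (ω j' * z j' ^ (k : ℕ)) •
        ((z j' • (1 : Matrix (Fin n) (Fin n) ℂ) - (Aᵀ * A).map Complex.ofReal)⁻¹ *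
          S0 (ℓ - 1))) i j)
    (F : Matrix (Fin n) (Fin n) ℂ)
    (hF : F = V.map Complex.ofReal * Matrix.diagonal f * (Vᵀ).map Complex.ofReal)
    (K : Matrix (Fin n) (Fin M × Fin L) ℂ)
    (hK : ∀ (k : Fin M) (i : Fin n) (j : Fin L),
      K i (k, j) = ((((Aᵀ * A).map Complex.ofReal) ^ (k : ℕ)) *
        Vin.map Complex.ofReal) i j) :
    S = F ^ ℓ * K :=
  stmt_7_general hMN ℓ hℓ U V σ hU hV A hA Vin z ω hzσ hquad f hf S0 hS0zero hS0succ S hS F hF K hK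
end
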